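/- arXiv:1901.05721 — 2 statements merged into one kernel-verified Lean document; each statement's English description precedes it below -/
import Mathlib

section
/- Let G be a full rank k × n binary matrix and let H be any (n−k) × n binary matrix of rank n−k with G·Hᵀ = 0. Then for any set S of k column indices, the columns of G indexed by S are linearly independent if and only if the columns of H indexed by the complement of S are linearly independent. Consequently the number of invertible k × k column-submatrices of G equals the number of invertible (n−k) × (n−k) column-submatrices of H. -/
open scoped Classical

/-- The columns of `M` indexed by `S` are linearly independent over `F₂`. -/
def colsIndep {r n : ℕ} (M : Matrix (Fin r) (Fin n) (ZMod 2)) (S : Finset (Fin n)) : Prop :=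
  LinearIndependent (ZMod 2) (fun j : {x // x ∈ S} => fun i => M i j.val)

/-- The number of `c`-element sets of column indices of `M` giving linearly independent
columns (equivalently, invertible `c × c` submatrices). -/
noncomputable def numInvertibleSub {r n : ℕ} (M : Matrix (Fin r) (Fin n) (ZMod 2))
    (c : ℕ) : ℕ :=
  ((Finset.univ.powersetCard c).filter (fun S => colsIndep M S)).card

/-!
Identify `F₂^k` with the row space of `G` via `x ↦ x ᵥ* G`: this is injective because `G` has
full rank, and its image is `ker H` by the orthogonality and the rank count `k + (n - k) = n`.
A dependency among the columns of `H` outside `S` is a nonzero vector of `ker H` vanishing on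
`S`, i.e. a nonzero `x` with `x ᵥ* G` vanishing on `S`, i.e. a dependency among the rows of the
`k × k` submatrix `G_S`. For a square matrix, rows are independent iff columns are.
-/

open Matrix Module

namespace Matrix

variable {m n p : Type*} [Fintype n]

section Field

variable {K : Type*} [Field K]

theorem linearIndependent_row_iff_rank_eq [Fintype m] (A : Matrix m n K) :
    LinearIndependent K A.row ↔ A.rank = Fintype.card m := by
  rw [rank_eq_finrank_span_row, linearIndependent_iff_card_eq_finrank_span, Set.finrank, eq_comm]

theorem linearIndependent_col_iff_rank_eq [Fintype m] (A : Matrix m n K) :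
    LinearIndependent K A.col ↔ A.rank = Fintype.card n := by
  rw [← row_transpose, linearIndependent_row_iff_rank_eq, rank_transpose]

theorem linearIndependent_col_iff_row_of_card_eq [Fintype m] (A : Matrix m n K)
    (h : Fintype.card m = Fintype.card n) :
    LinearIndependent K A.col ↔ LinearIndependent K A.row := by
  rw [linearIndependent_col_iff_rank_eq, linearIndependent_row_iff_rank_eq, h]

theorem ker_mulVecLin_eq_range_vecMulLinear [Fintype m] {G : Matrix m n K} {H : Matrix p n K}
    (horth : G * Hᵀ = 0) (hrank : G.rank + H.rank = Fintype.card n) :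
    LinearMap.ker H.mulVecLin = LinearMap.range G.vecMulLinear := by
  symm
  apply Submodule.eq_of_le_of_finrank_le
  · rintro _ ⟨x, rfl⟩
    rw [LinearMap.mem_ker, mulVecLin_apply, vecMulLinear_apply, ← mulVec_transpose, mulVec_mulVec,
      ← transpose_transpose H, ← transpose_mul, horth, transpose_zero, zero_mulVec]
  · have hdim := LinearMap.finrank_range_add_finrank_ker H.mulVecLin
    change H.rank + _ = _ at hdim
    rw [finrank_fintype_fun_eq_card] at hdim
    have hGT : finrank K (LinearMap.range Gᵀ.mulVecLin) = G.rank := rank_transpose G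
    rw [← mulVecLin_transpose, hGT]
    omega

end Field

section CommRing

variable {R : Type*} [CommRing R]

theorem linearIndepOn_col_iff (M : Matrix m n R) (s : Set n) :
    LinearIndepOn R M.col s ↔ ∀ v : n → R, (∀ j ∉ s, v j = 0) → M *ᵥ v = 0 → v = 0 := by
  rw [linearIndepOn_iff]
  refine (Finsupp.linearEquivFunOnFinite R R n).toEquiv.forall_congr fun l => ?_
  have hcomb : Finsupp.linearCombination R M.col l = M *ᵥ l := by
    ext i
    simp [Finsupp.linearCombination_apply, Finsupp.sum_fintype, mulVec, dotProduct, mul_comm]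
  rw [Finsupp.mem_supported', hcomb, ← Finsupp.coe_eq_zero]
  rfl

theorem linearIndepOn_col_compl_iff [Fintype m] {G : Matrix m n R} {H : Matrix p n R}
    (hG : LinearIndependent R G.row)
    (hker : LinearMap.ker H.mulVecLin = LinearMap.range G.vecMulLinear) (s : Set n) :
    LinearIndepOn R H.col sᶜ ↔ LinearIndependent R (G.submatrix id ((↑) : s → n)).row := by
  rw [linearIndepOn_col_iff, ← vecMul_injective_iff, ← coe_vecMulLinear, injective_iff_map_eq_zero]
  rw [← vecMul_injective_iff, ← coe_vecMulLinear, injective_iff_map_eq_zero] at hG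
  constructor
  · intro h x hx
    refine hG x (h _ (fun j hj => ?_) ?_)
    · exact congrFun hx ⟨j, not_not.mp hj⟩
    · exact hker.ge ⟨x, rfl⟩
  · intro h v hv hHv
    obtain ⟨x, rfl⟩ := hker.le hHv
    rw [h x (funext fun j => hv j (not_not.mpr j.2)), map_zero]

end CommRing

end Matrix

theorem Finset.card_filter_powersetCard_compl {α : Type*} [Fintype α] [DecidableEq α]
    {P Q : Finset α → Prop} [DecidablePred P] [DecidablePred Q] {k l : ℕ}
    (hkl : k + l = Fintype.card α) (h : ∀ S : Finset α, S.card = k → (P S ↔ Q Sᶜ)) :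
    ((univ.powersetCard k).filter P).card = ((univ.powersetCard l).filter Q).card := by
  refine card_bij' (fun S _ => Sᶜ) (fun T _ => Tᶜ) ?_ ?_ (fun S _ => compl_compl S)
    (fun T _ => compl_compl T)
  · intro S hS
    rw [mem_filter, mem_powersetCard_univ] at hS ⊢
    exact ⟨by rw [card_compl, hS.1]; omega, (h S hS.1).mp hS.2⟩
  · intro T hT
    rw [mem_filter, mem_powersetCard_univ] at hT ⊢
    have hcard : Tᶜ.card = k := by rw [card_compl, hT.1]; omega
    exact ⟨hcard, (h Tᶜ hcard).mpr (by rw [compl_compl]; exact hT.2)⟩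

/-- Let `G` be a full-rank `k × n` binary matrix (`n = k + m ≥ k`) and `H`
any `m × n` binary matrix of rank `m = n − k` with `G · Hᵀ = 0`. Then a set `S` of `k`
column indices gives independent columns in `G` iff its complement gives independent
columns in `H`; consequently the numbers of invertible column-submatrices agree. -/
theorem stmt_6 {k m : ℕ} (G : Matrix (Fin k) (Fin (k + m)) (ZMod 2))
    (H : Matrix (Fin m) (Fin (k + m)) (ZMod 2))
    (hG : G.rank = k) (hH : H.rank = m) (horth : G * H.transpose = 0) :
    (∀ S : Finset (Fin (k + m)), S.card = k → (colsIndep G S ↔ colsIndep H Sᶜ)) ∧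
      numInvertibleSub G k = numInvertibleSub H m := by
  have hrows : LinearIndependent (ZMod 2) G.row := by
    rw [linearIndependent_row_iff_rank_eq, hG, Fintype.card_fin]
  have hker := ker_mulVecLin_eq_range_vecMulLinear horth (by rw [hG, hH, Fintype.card_fin])
  have hdual : ∀ S : Finset (Fin (k + m)), S.card = k → (colsIndep G S ↔ colsIndep H Sᶜ) := by
    intro S hS
    have hsquare : Fintype.card (Fin k) = Fintype.card S := by simp [hS]
    calc colsIndep G S
        ↔ LinearIndependent (ZMod 2) (G.submatrix id ((↑) : S → Fin (k + m))).col := Iff.rfl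
      _ ↔ LinearIndependent (ZMod 2) (G.submatrix id ((↑) : S → Fin (k + m))).row :=
        linearIndependent_col_iff_row_of_card_eq _ hsquare
      _ ↔ colsIndep H Sᶜ := by
        rw [← linearIndepOn_col_compl_iff hrows hker, ← Finset.coe_compl]
        rfl
  exact ⟨hdual, Finset.card_filter_powersetCard_compl (by simp) hdual⟩
end

section
/- Let G be a full rank k × n binary matrix (n ≥ k) with dual code C⊥ of minimum weight d*, and suppose 3d*/2 > max(k, n−k) and k ≥ n−k. Then the number D of k-element subsets S of {1,…,n} whose corresponding k × k submatrix of G is singular equals D = Σ_{d=d*}^{k} A_d · C(n−d, n−k), where A_d is the number of codewords of Hamming weight d in C⊥. -/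
/-!
A set `S` of columns of `G` is dependent iff it contains the support of a nonzero dual codeword.
If `S` contained the supports of two distinct ones `v`, `w`, then `v + w` would be a third, and
since every coordinate of `supp v ∪ supp w` lies in exactly two of the three supports,
`3 d* ≤ 2 |S|`. For `|S| = k < 3 d*/2` the dependent `k`-sets are therefore partitioned according
to the unique codeword they contain, and a codeword of weight `d` lies in `C(n - d, n - k)` of them.
-/

open scoped Classical

/-- Hamming weight of a binary vector. -/
def wt {n : ℕ} (v : Fin n → ZMod 2) : ℕ :=
  (Finset.univ.filter (fun i => v i ≠ 0)).card

/-- The columns of `M` indexed by `S` are linearly dependent over `F₂`. -/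
def colsDep {k n : ℕ} (M : Matrix (Fin k) (Fin n) (ZMod 2)) (S : Finset (Fin n)) : Prop :=
  ∃ c : Fin n → ZMod 2, c ≠ 0 ∧ (∀ j, c j ≠ 0 → j ∈ S) ∧ M.mulVec c = 0

/-- Number of `k`-element column subsets of `G` that are linearly dependent
(i.e. singular `k × k` column-submatrices). -/
noncomputable def numSingularSub {k n : ℕ} (G : Matrix (Fin k) (Fin n) (ZMod 2)) : ℕ :=
  ((Finset.univ.powersetCard k).filter (fun S => colsDep G S)).card

/-- Weight enumerator coefficient `A_d` of the dual code `C⊥ = {v : G·v = 0}`: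
the number of dual codewords of Hamming weight exactly `d`. -/
noncomputable def dualWEC {k n : ℕ} (G : Matrix (Fin k) (Fin n) (ZMod 2)) (d : ℕ) : ℕ :=
  ((Finset.univ : Finset (Fin n → ZMod 2)).filter
    (fun v => G.mulVec v = 0 ∧ wt v = d)).card

open Finset

section Weight

variable {n : ℕ}

def supp (v : Fin n → ZMod 2) : Finset (Fin n) := {i | v i ≠ 0}

lemma card_supp (v : Fin n → ZMod 2) : #(supp v) = wt v := rfl

lemma wt_pos_iff {v : Fin n → ZMod 2} : 0 < wt v ↔ v ≠ 0 := hammingNorm_pos_iff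

lemma wt_add_add_two_mul_card_inter (v w : Fin n → ZMod 2) :
    wt (v + w) + 2 * #(supp v ∩ supp w) = wt v + wt w := by
  have key : ∀ a b : ZMod 2, ((if a + b ≠ 0 then 1 else 0) + 2 * if a ≠ 0 ∧ b ≠ 0 then 1 else 0)
      = (if a ≠ 0 then 1 else 0) + if b ≠ 0 then 1 else 0 := by decide
  simp only [wt, supp, ← filter_and, card_filter, mul_sum, ← sum_add_distrib]
  exact sum_congr rfl fun i _ => key (v i) (w i)

lemma three_mul_le_two_mul_card_supp_union {d : ℕ} {v w : Fin n → ZMod 2}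
    (hv : d ≤ wt v) (hw : d ≤ wt w) (hvw : d ≤ wt (v + w)) :
    3 * d ≤ 2 * #(supp v ∪ supp w) := by
  have := wt_add_add_two_mul_card_inter v w
  have := card_union_add_card_inter (supp v) (supp w)
  rw [card_supp, card_supp] at this
  omega

end Weight

lemma card_powersetCard_filter_superset {α : Type*} [Fintype α] [DecidableEq α]
    (A : Finset α) {k : ℕ} (hk : k ≤ Fintype.card α) :
    #{S ∈ powersetCard k univ | A ⊆ S} = (Fintype.card α - #A).choose (Fintype.card α - k) := by
  rw [← card_compl, ← card_powersetCard]
  refine card_nbij' compl compl (fun S hS => ?_) (fun T hT => ?_)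
    (fun S _ => compl_compl S) (fun T _ => compl_compl T)
  · simp only [coe_filter, mem_powersetCard, Set.mem_ofPred_eq, mem_coe] at hS ⊢
    exact ⟨compl_subset_compl.mpr hS.2, by rw [card_compl, hS.1.2]⟩
  · simp only [coe_filter, mem_powersetCard, Set.mem_ofPred_eq, mem_coe] at hT ⊢
    exact ⟨⟨subset_univ _, by rw [card_compl, hT.2]; omega⟩, subset_compl_comm.mp hT.1⟩

section DualCode

variable {k n : ℕ} (G : Matrix (Fin k) (Fin n) (ZMod 2))

lemma colsDep_iff {S : Finset (Fin n)} :
    colsDep G S ↔ ∃ c, c ≠ 0 ∧ G.mulVec c = 0 ∧ supp c ⊆ S := by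
  simp only [colsDep, supp, subset_iff, mem_filter, mem_univ, true_and]
  exact exists_congr fun c => by tauto

lemma eq_of_supp_subset {d : ℕ} (hmin : ∀ v : Fin n → ZMod 2, v ≠ 0 → G.mulVec v = 0 → d ≤ wt v)
    {S : Finset (Fin n)} (hS : 2 * #S < 3 * d) {v w : Fin n → ZMod 2}
    (hv : v ≠ 0) (hvG : G.mulVec v = 0) (hvS : supp v ⊆ S)
    (hw : w ≠ 0) (hwG : G.mulVec w = 0) (hwS : supp w ⊆ S) : v = w := by
  by_contra hvw
  have hsum : v + w ≠ 0 := fun h => hvw (funext fun i => CharTwo.add_eq_zero.mp (congrFun h i))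
  have hcover := three_mul_le_two_mul_card_supp_union (hmin v hv hvG) (hmin w hw hwG)
    (hmin _ hsum (by rw [Matrix.mulVec_add, hvG, hwG, add_zero]))
  have := card_le_card (union_subset hvS hwS)
  omega

lemma numSingularSub_eq_sum {d : ℕ} (hkn : k ≤ n)
    (hmin : ∀ v : Fin n → ZMod 2, v ≠ 0 → G.mulVec v = 0 → d ≤ wt v) (hk : 2 * k < 3 * d) :
    numSingularSub G = ∑ v with v ≠ 0 ∧ G.mulVec v = 0 ∧ wt v ≤ k, (n - wt v).choose (n - k) := by
  set C : Finset (Fin n → ZMod 2) := {v | v ≠ 0 ∧ G.mulVec v = 0 ∧ wt v ≤ k}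
  have hdep : {S ∈ powersetCard k (univ : Finset (Fin n)) | colsDep G S}
      = C.biUnion fun v => {S ∈ powersetCard k univ | supp v ⊆ S} := by
    ext S
    simp only [colsDep_iff, C, mem_filter, mem_biUnion, mem_powersetCard, mem_univ, true_and]
    constructor
    · rintro ⟨hS, c, hc, hcG, hcS⟩
      exact ⟨c, ⟨hc, hcG, hS.2 ▸ card_le_card hcS⟩, hS, hcS⟩
    · rintro ⟨c, ⟨hc, hcG, -⟩, hS, hcS⟩
      exact ⟨hS, c, hc, hcG, hcS⟩
  have hdisj : (C : Set (Fin n → ZMod 2)).PairwiseDisjoint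
      fun v => {S ∈ powersetCard k (univ : Finset (Fin n)) | supp v ⊆ S} := by
    intro v hv w hw hvw
    simp only [C, coe_filter, Set.mem_ofPred_eq, mem_univ, true_and] at hv hw
    refine disjoint_left.mpr fun S hvS hwS => hvw ?_
    simp only [mem_filter, mem_powersetCard] at hvS hwS
    exact eq_of_supp_subset G hmin (hvS.1.2 ▸ hk) hv.1 hv.2.1 hvS.2 hw.1 hw.2.1 hwS.2
  rw [numSingularSub, hdep, card_biUnion hdisj]
  refine sum_congr rfl fun v _ => ?_
  rw [card_powersetCard_filter_superset _ (by simpa using hkn), Fintype.card_fin, card_supp]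

lemma card_filter_wt_eq_dualWEC {d : ℕ} (hd : 0 < d) (hdk : d ≤ k) :
    #{v ∈ {v | v ≠ 0 ∧ G.mulVec v = 0 ∧ wt v ≤ k} | wt v = d} = dualWEC G d := by
  rw [dualWEC, filter_filter]
  congr 1
  ext v
  simp only [mem_filter, mem_univ, true_and]
  constructor
  · rintro ⟨⟨-, hvG, -⟩, rfl⟩
    exact ⟨hvG, rfl⟩
  · rintro ⟨hvG, rfl⟩
    exact ⟨⟨wt_pos_iff.mp hd, hvG, hdk⟩, rfl⟩

end DualCode

theorem stmt_10_general {k n dstar : ℕ} (hkn : k ≤ n)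
    (G : Matrix (Fin k) (Fin n) (ZMod 2))
    (hmin : ∀ v : Fin n → ZMod 2, v ≠ 0 → G.mulVec v = 0 → dstar ≤ wt v)
    (h3k : 2 * k < 3 * dstar) :
    numSingularSub G = ∑ d ∈ Finset.Icc dstar k, dualWEC G d * (n - d).choose (n - k) := by
  rw [numSingularSub_eq_sum G hkn hmin h3k,
    ← sum_fiberwise_of_maps_to' (t := Icc dstar k) (g := wt) ?maps fun d => (n - d).choose (n - k)]
  case maps =>
    intro v hv
    simp only [mem_filter, mem_univ, true_and] at hv
    exact mem_Icc.mpr ⟨hmin v hv.1 hv.2.1, hv.2.2⟩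
  refine sum_congr rfl fun d hd => ?_
  obtain ⟨hdstar, hdk⟩ := mem_Icc.mp hd
  rw [sum_const, smul_eq_mul, card_filter_wt_eq_dualWEC G (by omega) hdk]

/-- For a full-rank `k × n` binary matrix `G` (`n ≥ k`) whose dual code has
minimum weight `d*` with `3d*/2 > max(k, n−k)` and `k ≥ n−k`, the number `D` of singular
`k × k` column-submatrices of `G` is `D = ∑_{d=d*}^{k} A_d · C(n−d, n−k)`. -/
theorem stmt_10 {k n dstar : ℕ} (hkn : k ≤ n) (hk2 : n - k ≤ k)
    (G : Matrix (Fin k) (Fin n) (ZMod 2)) (hrank : G.rank = k)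
    (hex : ∃ v : Fin n → ZMod 2, v ≠ 0 ∧ G.mulVec v = 0 ∧ wt v = dstar)
    (hmin : ∀ v : Fin n → ZMod 2, v ≠ 0 → G.mulVec v = 0 → dstar ≤ wt v)
    (h3k : 2 * k < 3 * dstar) (h3nk : 2 * (n - k) < 3 * dstar) :
    numSingularSub G = ∑ d ∈ Finset.Icc dstar k, dualWEC G d * (n - d).choose (n - k) :=
  stmt_10_general hkn G hmin h3k
end
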